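/- arXiv:1807.05152 — 2 statements merged into one kernel-verified Lean document; each statement's English description precedes it below -/
import Mathlib

section
/- Let q > 1 be a real number and Δ ∈ ℕ a fixed natural number. Then lim_{n→∞} (1/n) · log_q [n; n−Δ]_q = Δ, where [n; n−Δ]_q is the q-binomial coefficient. -/
/-!
Since `qⁿ ≤ [n+1]_q ≤ qⁿ⁺¹/(q-1)`, we have `log_q [n+1]_q = n + O(1)`. Writing `n = m + Δ`,
`[m+Δ; m]_q = [m+1]_q ⋯ [m+Δ]_q / [Δ]_q!`, so `log_q [m+Δ; m]_q = Δ·(m+Δ) + O(1)`, and dividing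
by `m + Δ` gives the limit `Δ`.
-/

open Filter Topology

/-- The `q`-integer `[n]_q = (qⁿ − 1)/(q − 1)`. -/
noncomputable def qInt (q : ℝ) (n : ℕ) : ℝ := (q ^ n - 1) / (q - 1)

/-- The `q`-factorial `[n]_q! = ∏_{i=1}^n [i]_q`. -/
noncomputable def qFact (q : ℝ) (n : ℕ) : ℝ := ∏ i ∈ Finset.range n, qInt q (i + 1)

/-- The `q`-binomial coefficient `[n; k]_q = [n]_q!/([k]_q!·[n−k]_q!)`. -/
noncomputable def qBinom (q : ℝ) (n k : ℕ) : ℝ := qFact q n / (qFact q k * qFact q (n - k))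

open Asymptotics Finset Real

theorem tendsto_div_of_sub_mul_isBigO_one {α : Type*} {l : Filter α} {a x : α → ℝ} {c : ℝ}
    (hx : Tendsto x l atTop) (ha : (fun i => a i - c * x i) =O[l] fun _ => (1 : ℝ)) :
    Tendsto (fun i => a i / x i) l (𝓝 c) := by
  rw [← tendsto_sub_nhds_zero_iff]
  have hdiff : (fun i => (a i - c * x i) * (x i)⁻¹) =ᶠ[l] fun i => a i / x i - c := by
    filter_upwards [hx.eventually_ne_atTop 0] with i hi
    field_simp
  refine ((ha.mul (isBigO_refl _ l)).trans_tendsto ?_).congr' hdiff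
  simp only [one_mul]
  exact tendsto_inv_atTop_zero.comp hx

section qAnalogues

variable {q : ℝ}

theorem qInt_succ_pos (hq : 1 < q) (n : ℕ) : 0 < qInt q (n + 1) :=
  div_pos (sub_pos.2 (one_lt_pow₀ hq n.succ_ne_zero)) (sub_pos.2 hq)

theorem qFact_pos (hq : 1 < q) (n : ℕ) : 0 < qFact q n :=
  prod_pos fun i _ => qInt_succ_pos hq i

theorem pow_le_qInt_succ (hq : 1 < q) (n : ℕ) : q ^ n ≤ qInt q (n + 1) := by
  rw [qInt, le_div_iff₀ (by linarith), pow_succ]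
  nlinarith [one_le_pow₀ (n := n) hq.le]

theorem qInt_le_pow_div (hq : 1 < q) (n : ℕ) : qInt q n ≤ q ^ n / (q - 1) :=
  div_le_div_of_nonneg_right (by linarith) (by linarith)

theorem logb_qInt_succ_sub_isBigO_one (hq : 1 < q) :
    (fun n : ℕ => logb q (qInt q (n + 1)) - n) =O[atTop] fun _ => (1 : ℝ) := by
  refine .of_bound (1 - logb q (q - 1)) (.of_forall fun n => ?_)
  have hlo : (n : ℝ) ≤ logb q (qInt q (n + 1)) := by
    simpa [logb_pow, logb_self_eq_one hq] using
      logb_le_logb_of_le hq (by positivity) (pow_le_qInt_succ hq n)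
  have hhi : logb q (qInt q (n + 1)) ≤ n + 1 - logb q (q - 1) := by
    have := logb_le_logb_of_le hq (qInt_succ_pos hq n) (qInt_le_pow_div hq (n + 1))
    rw [logb_div (by positivity) (by linarith), logb_pow, logb_self_eq_one hq] at this
    push_cast at this
    linarith
  rw [norm_one, mul_one, Real.norm_of_nonneg (by linarith)]
  linarith

theorem qFact_add (q : ℝ) (m k : ℕ) :
    qFact q (m + k) = qFact q m * ∏ j ∈ range k, qInt q (m + j + 1) :=
  prod_range_add _ m k

theorem qBinom_add_left (hq : 1 < q) (m k : ℕ) :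
    qBinom q (m + k) m = (∏ j ∈ range k, qInt q (m + j + 1)) / qFact q k := by
  rw [qBinom, Nat.add_sub_cancel_left, qFact_add, mul_div_mul_left _ _ (qFact_pos hq m).ne']

theorem logb_qBinom_add_left_sub_isBigO_one (hq : 1 < q) (k : ℕ) :
    (fun m : ℕ => logb q (qBinom q (m + k) m) - k * (m + k : ℕ)) =O[atTop]
      fun _ => (1 : ℝ) := by
  have hterm (j : ℕ) : (fun m : ℕ => logb q (qInt q (m + j + 1)) - (m + j : ℕ)) =O[atTop]
      fun _ => (1 : ℝ) :=
    (logb_qInt_succ_sub_isBigO_one hq).comp_tendsto (tendsto_add_atTop_nat j)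
  have hsum := (IsBigO.fun_sum fun j (_ : j ∈ range k) => hterm j).add
    (isBigO_const_one ℝ (∑ j ∈ range k, ((j : ℝ) - k) - logb q (qFact q k)) atTop)
  refine hsum.congr_left fun m => ?_
  rw [qBinom_add_left hq, logb_div (prod_pos fun j _ => qInt_succ_pos hq _).ne'
    (qFact_pos hq k).ne', logb_prod _ _ fun j _ => (qInt_succ_pos hq _).ne']
  simp only [sum_sub_distrib, sum_add_distrib, sum_const, card_range, nsmul_eq_mul, Nat.cast_add]
  ring

end qAnalogues

/-- For fixed `Δ ∈ ℕ` and real `q > 1`,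
`(1/n) · log_q [n; n−Δ]_q → Δ` as `n → ∞`. -/
theorem qBinom_codim_log_asymptotics (q : ℝ) (hq : 1 < q) (Δ : ℕ) :
    Tendsto (fun n : ℕ =>
        (1 / (n : ℝ)) * (Real.log (qBinom q n (n - Δ)) / Real.log q))
      atTop (𝓝 (Δ : ℝ)) := by
  rw [← tendsto_add_atTop_iff_nat Δ]
  have hshift := tendsto_div_of_sub_mul_isBigO_one
    (tendsto_natCast_atTop_atTop.comp (tendsto_add_atTop_nat Δ))
    (logb_qBinom_add_left_sub_isBigO_one hq Δ)
  refine hshift.congr fun m => ?_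
  rw [Function.comp_apply, Nat.add_sub_cancel, log_div_log, one_div_mul_eq_div]
end

section
/- Let q > 1 and θ > 0 be real numbers and d ∈ ℕ fixed. Then lim_{n→∞} [n; n−d]_q · θ^{n−d} · q^{(n−d)(n−d−1)/2} / (−θ; q)_n = μ(d), where μ(d) = q^{ −½(d − (½ − log_q θ))² + ½(½ − log_q θ)² } · (q^{−(d+1)}; q^{−1})_∞ / [ (q^{−1}; q^{−1})_∞ · (−θ^{−1}; q^{−1})_∞ ]. -/
open Filter Topology

/-- The `q`-Pochhammer symbol `(a; x)_n = ∏_{i=0}^{n−1} (1 − a xⁱ)`. -/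
noncomputable def qPoch (a x : ℝ) (n : ℕ) : ℝ := ∏ i ∈ Finset.range n, (1 - a * x ^ i)

/-- The infinite `q`-Pochhammer symbol `(a; x)_∞ = ∏_{i=0}^∞ (1 − a xⁱ)`. -/
noncomputable def qPochInf (a x : ℝ) : ℝ := ∏' i : ℕ, (1 - a * x ^ i)

/-!
Write `x = q⁻¹` and `n = m + d`. Pulling `-a xⁱ` out of every factor of a `q`-Pochhammer symbol
turns `(a; x)_n` into `(-a)ⁿ x^(n choose 2) (a⁻¹; x⁻¹)_n`; applied to the `q`-binomial and to
`(−θ; q)_n`, all powers of `q` and `θ` cancel except `θ^(-d) q^(-(d choose 2))`, which is exactly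
the Gaussian-looking power of `q` in the limit, and the probability becomes
`(x^(m+1); x)_d / (θ^d q^(d choose 2) (x; x)_d (−θ⁻¹; x)_n)`.
As `n → ∞` the numerator tends to `1` and `(−θ⁻¹; x)_n` to `(−θ⁻¹; x)_∞`, while
`(x; x)_∞ = (x; x)_d (x^(d+1); x)_∞`. The infinite products are positive because the logarithms
of their factors are summable.
-/

open Finset

theorem Nat.choose_two_add (m d : ℕ) : (m + d).choose 2 = m.choose 2 + m * d + d.choose 2 := by
  induction d with
  | zero => simp
  | succ d ih =>
    rw [← add_assoc, Nat.choose_succ_succ', Nat.choose_succ_succ', ih, Nat.choose_one_right,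
      Nat.choose_one_right]
    ring

section Pochhammer

variable {a x : ℝ}

theorem qPoch_succ (a x : ℝ) (n : ℕ) : qPoch a x (n + 1) = qPoch a x n * (1 - a * x ^ n) :=
  prod_range_succ _ n

theorem qPoch_add (a x : ℝ) (m k : ℕ) :
    qPoch a x (m + k) = qPoch a x m * qPoch (a * x ^ m) x k := by
  simp only [qPoch, prod_range_add, pow_add, mul_assoc]

theorem qPoch_eq_mul_qPoch_inv (ha : a ≠ 0) (hx : x ≠ 0) (n : ℕ) :
    qPoch a x n = (-a) ^ n * x ^ n.choose 2 * qPoch a⁻¹ x⁻¹ n := by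
  induction n with
  | zero => simp [qPoch]
  | succ n ih =>
    rw [qPoch_succ, qPoch_succ, ih, Nat.choose_succ_succ', Nat.choose_one_right, inv_pow]
    field_simp
    ring

theorem one_sub_mul_pow_pos (ha : a < 1) (hx0 : 0 ≤ x) (hx1 : x ≤ 1) (i : ℕ) :
    0 < 1 - a * x ^ i := by
  have h0 : 0 ≤ x ^ i := pow_nonneg hx0 i
  have h1 : x ^ i ≤ 1 := pow_le_one₀ hx0 hx1
  rcases le_or_gt 0 a with h | h <;> nlinarith

theorem qPoch_pos (ha : a < 1) (hx0 : 0 ≤ x) (hx1 : x ≤ 1) (n : ℕ) : 0 < qPoch a x n :=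
  prod_pos fun i _ => one_sub_mul_pow_pos ha hx0 hx1 i

theorem multipliable_one_sub_mul_pow (a : ℝ) (hx : |x| < 1) :
    Multipliable fun i : ℕ => 1 - a * x ^ i := by
  simpa [sub_eq_add_neg] using
    Real.multipliable_one_add_of_summable ((summable_geometric_of_abs_lt_one hx).mul_left (-a))

theorem tendsto_qPoch_qPochInf (a : ℝ) (hx : |x| < 1) :
    Tendsto (qPoch a x) atTop (𝓝 (qPochInf a x)) :=
  (multipliable_one_sub_mul_pow a hx).hasProd.tendsto_prod_nat

theorem qPochInf_eq_qPoch_mul (a : ℝ) (hx : |x| < 1) (k : ℕ) :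
    qPochInf a x = qPoch a x k * qPochInf (a * x ^ k) x := by
  have hshift : (fun i => 1 - a * x ^ (i + k)) = fun i => 1 - a * x ^ k * x ^ i := by
    funext i; ring
  have hmul : Multipliable fun i => 1 - a * x ^ (i + k) := by
    rw [hshift]; exact multipliable_one_sub_mul_pow (a * x ^ k) hx
  have h := hmul.prod_mul_tprod_nat_mul' (f := fun i => 1 - a * x ^ i)
  simp only [hshift] at h
  rw [qPochInf, ← h, qPoch, qPochInf]

theorem qPochInf_pos (ha : a < 1) (hx0 : 0 ≤ x) (hx1 : x < 1) : 0 < qPochInf a x := by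
  have hpos := one_sub_mul_pow_pos ha hx0 hx1.le
  have hlog : Summable fun i => Real.log (1 - a * x ^ i) := by
    simpa [sub_eq_add_neg] using Real.summable_log_one_add_of_summable
      ((summable_geometric_of_lt_one hx0 hx1).mul_left (-a))
  rw [qPochInf, ← Real.rexp_tsum_eq_tprod hpos hlog]
  exact Real.exp_pos _

theorem tendsto_qPoch_one_of_tendsto_zero {ι : Type*} {l : Filter ι} {a : ι → ℝ}
    (h : Tendsto a l (𝓝 0)) (x : ℝ) (k : ℕ) : Tendsto (fun t => qPoch (a t) x k) l (𝓝 1) := by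
  have hc : Continuous fun a => qPoch a x k := by unfold qPoch; fun_prop
  simpa [qPoch, Function.comp_def] using (hc.tendsto 0).comp h

end Pochhammer

theorem qFact_eq_qPoch_div {q : ℝ} (hq : q ≠ 1) (n : ℕ) :
    qFact q n = qPoch q q n / (1 - q) ^ n := by
  have hq' : 1 - q ≠ 0 := sub_ne_zero.2 hq.symm
  have hpow : (1 - q) ^ n = ∏ _i ∈ range n, (1 - q) := by simp
  rw [qFact, qPoch, hpow, ← prod_div_distrib]
  refine prod_congr rfl fun i _ => ?_
  rw [qInt]
  field_simp
  ring

theorem qBinom_add_left_s10 {q : ℝ} (hq : 1 < q) (m k : ℕ) :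
    qBinom q (m + k) m = qPoch (q * q ^ m) q k / qPoch q q k := by
  have hq1 : q ≠ 1 := hq.ne'
  have hsub : 1 - q ≠ 0 := sub_ne_zero.2 hq1.symm
  have hpos (n : ℕ) : qPoch q q n ≠ 0 := prod_ne_zero_iff.2 fun i _ => by
    rw [← pow_succ']
    exact sub_ne_zero.2 (one_lt_pow₀ hq i.succ_ne_zero).ne
  rw [qBinom, Nat.add_sub_cancel_left, qFact_eq_qPoch_div hq1, qFact_eq_qPoch_div hq1,
    qFact_eq_qPoch_div hq1, qPoch_add]
  field_simp [hpos m, hpos k]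
  ring

theorem qBinom_add_left_mul_div_qPoch_neg {q θ : ℝ} (hq : 1 < q) (hθ : 0 < θ) (m d : ℕ) :
    qBinom q (m + d) m * θ ^ m * q ^ m.choose 2 / qPoch (-θ) q (m + d) =
      qPoch (q⁻¹ ^ (m + 1)) q⁻¹ d /
        (θ ^ d * q ^ d.choose 2 * qPoch q⁻¹ q⁻¹ d * qPoch (-θ⁻¹) q⁻¹ (m + d)) := by
  have hq0 : 0 < q := one_pos.trans hq
  have hx0 : 0 ≤ q⁻¹ := inv_nonneg.2 hq0.le
  have hx1 : q⁻¹ ≤ 1 := inv_le_one_of_one_le₀ hq.le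
  have hD := qPoch_pos (inv_lt_one_of_one_lt₀ hq) hx0 hx1 d
  have hV := qPoch_pos (a := -θ⁻¹) (by linarith [inv_pos.2 hθ]) hx0 hx1 (m + d)
  rw [qBinom_add_left_s10 hq, qPoch_eq_mul_qPoch_inv (a := q * q ^ m) (by positivity) hq0.ne',
    qPoch_eq_mul_qPoch_inv hq0.ne' hq0.ne', qPoch_eq_mul_qPoch_inv (neg_ne_zero.2 hθ.ne') hq0.ne',
    Nat.choose_two_add, neg_neg, inv_neg,
    show (q * q ^ m)⁻¹ = q⁻¹ ^ (m + 1) by rw [inv_pow, pow_succ']]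
  generalize qPoch (q⁻¹ ^ (m + 1)) q⁻¹ d = A
  generalize qPoch q⁻¹ q⁻¹ d = D at hD ⊢
  generalize qPoch (-θ⁻¹) q⁻¹ (m + d) = V at hV ⊢
  rw [neg_pow (q * q ^ m), neg_pow q, mul_pow, ← pow_mul]
  field_simp
  ring

theorem rpow_half_sq_exponent_eq {q θ : ℝ} (hq0 : 0 < q) (hq1 : q ≠ 1) (hθ : 0 < θ) (d : ℕ) :
    q ^ (-(1 / 2 : ℝ) * ((d : ℝ) - (1 / 2 - Real.logb q θ)) ^ 2
        + (1 / 2 : ℝ) * (1 / 2 - Real.logb q θ) ^ 2) = (θ ^ d * q ^ d.choose 2)⁻¹ := by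
  have hexp : -(1 / 2 : ℝ) * ((d : ℝ) - (1 / 2 - Real.logb q θ)) ^ 2
      + (1 / 2 : ℝ) * (1 / 2 - Real.logb q θ) ^ 2
      = Real.logb q θ * (-(d : ℝ)) + (-(d.choose 2 : ℝ)) := by
    rw [Nat.cast_choose_two]; ring
  rw [hexp, Real.rpow_add hq0, Real.rpow_mul hq0.le, Real.rpow_logb hq0 hq1 hθ,
    Real.rpow_neg hθ.le, Real.rpow_neg hq0.le, Real.rpow_natCast, Real.rpow_natCast, mul_inv]

/-- For real `q > 1`, `θ > 0` and fixed `d ∈ ℕ`,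
`[n; n−d]_q θ^{n−d} q^{(n−d)(n−d−1)/2}/(−θ; q)_n → μ(d)` as `n → ∞`, where
`μ(d) = q^{−½(d−(½−log_q θ))² + ½(½−log_q θ)²} (q^{−(d+1)}; q⁻¹)_∞ /
  ((q⁻¹; q⁻¹)_∞ (−θ⁻¹; q⁻¹)_∞)`. -/
theorem grassmannian_codim_probability_limit (q θ : ℝ) (hq : 1 < q) (hθ : 0 < θ) (d : ℕ) :
    Tendsto (fun n : ℕ =>
        qBinom q n (n - d) * θ ^ (n - d) * q ^ ((n - d) * (n - d - 1) / 2) /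
          qPoch (-θ) q n)
      atTop
      (𝓝 (q ^ (-(1 / 2 : ℝ) * ((d : ℝ) - (1 / 2 - Real.log θ / Real.log q)) ^ 2
              + (1 / 2 : ℝ) * (1 / 2 - Real.log θ / Real.log q) ^ 2) *
            qPochInf (q⁻¹ ^ (d + 1)) q⁻¹ /
            (qPochInf q⁻¹ q⁻¹ * qPochInf (-θ⁻¹) q⁻¹))) := by
  have hq0 : 0 < q := one_pos.trans hq
  have hx0 : 0 ≤ q⁻¹ := inv_nonneg.2 hq0.le
  have hx1 : q⁻¹ < 1 := inv_lt_one_of_one_lt₀ hq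
  have hx : |q⁻¹| < 1 := by rwa [abs_of_nonneg hx0]
  have hV := qPochInf_pos (a := -θ⁻¹) (by linarith [inv_pos.2 hθ]) hx0 hx1
  have hT := qPochInf_pos (a := q⁻¹ ^ (d + 1)) (pow_lt_one₀ hx0 hx1 d.succ_ne_zero) hx0 hx1
  have hD := qPoch_pos hx1 hx0 hx1.le d
  have hratio : ∀ᶠ n in atTop, qPoch (q⁻¹ ^ (n - d + 1)) q⁻¹ d /
        (θ ^ d * q ^ d.choose 2 * qPoch q⁻¹ q⁻¹ d * qPoch (-θ⁻¹) q⁻¹ n) =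
        qBinom q n (n - d) * θ ^ (n - d) * q ^ ((n - d) * (n - d - 1) / 2) / qPoch (-θ) q n := by
    filter_upwards [eventually_ge_atTop d] with n hn
    obtain ⟨m, rfl⟩ := Nat.exists_eq_add_of_le' hn
    rw [Nat.add_sub_cancel, ← Nat.choose_two_right, qBinom_add_left_mul_div_qPoch_neg hq hθ]
  have hsmall : Tendsto (fun n => q⁻¹ ^ (n - d + 1)) atTop (𝓝 0) :=
    (tendsto_pow_atTop_nhds_zero_of_lt_one hx0 hx1).comp
      ((tendsto_add_atTop_nat 1).comp (tendsto_sub_atTop_nat d))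
  have hlim := (tendsto_qPoch_one_of_tendsto_zero hsmall q⁻¹ d).div
    ((tendsto_qPoch_qPochInf (-θ⁻¹) hx).const_mul (θ ^ d * q ^ d.choose 2 * qPoch q⁻¹ q⁻¹ d))
    (by positivity)
  convert hlim.congr' hratio using 2
  rw [Real.log_div_log, rpow_half_sq_exponent_eq hq0 hq.ne' hθ,
    qPochInf_eq_qPoch_mul q⁻¹ hx d, ← pow_succ']
  generalize qPochInf (q⁻¹ ^ (d + 1)) q⁻¹ = T at hT ⊢
  generalize qPochInf (-θ⁻¹) q⁻¹ = V at hV ⊢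
  generalize qPoch q⁻¹ q⁻¹ d = D at hD ⊢
  field_simp
end
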